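/- arXiv:1509.05010 — 4 statements merged into one kernel-verified Lean document; each statement's English description precedes it below -/
import Mathlib

section
/- Let f:ℝ→ℝ satisfy the Lipschitz condition with constant L>0 on [a,b], let x_0,…,x_k ∈ [a,b] be trial points with values z_i = f(x_i), and let F_k(x) = max_{0≤i≤k} (z_i − L·|x−x_i|). Then the global minimum value f* = min_{x∈[a,b]} f(x) is bracketed as: min_{x∈[a,b]} F_k(x) ≤ f* ≤ min_{0≤i≤k} z_i. -/
/-! Each cone `x ↦ f(xᵢ) - L|x - xᵢ|` lies below `f` on `[a,b]` by the Lipschitz condition, so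
their maximum `F_k` does too; evaluating at a minimiser `x*` gives `inf F_k ≤ F_k(x*) ≤ f(x*)`.
The first step needs `F_k` bounded below on `[a,b]` (otherwise `sInf` is junk), which holds
since `F_k` is continuous. The upper bound holds because every trial point lies in `[a,b]`. -/

noncomputable section

variable {ι : Type*} [Fintype ι] [Nonempty ι]

def lipschitzMinorant (f : ℝ → ℝ) (L : ℝ) (p : ι → ℝ) (x : ℝ) : ℝ :=
  Finset.univ.sup' Finset.univ_nonempty fun i => f (p i) - L * |x - p i|

theorem continuous_lipschitzMinorant (f : ℝ → ℝ) (L : ℝ) (p : ι → ℝ) :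
    Continuous (lipschitzMinorant f L p) :=
  Continuous.finset_sup'_apply Finset.univ_nonempty fun i _ => by fun_prop

theorem lipschitzMinorant_le {f : ℝ → ℝ} {L : ℝ} {s : Set ℝ}
    (hf : ∀ x ∈ s, ∀ y ∈ s, |f x - f y| ≤ L * |x - y|) {p : ι → ℝ} (hp : ∀ i, p i ∈ s)
    {x : ℝ} (hx : x ∈ s) : lipschitzMinorant f L p x ≤ f x := by
  refine Finset.sup'_le _ _ fun i _ => ?_
  have h := (abs_le.mp (hf (p i) (hp i) x hx)).2
  rw [abs_sub_comm] at h
  linarith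

theorem csInf_image_lipschitzMinorant_le {f : ℝ → ℝ} {L a b : ℝ}
    (hf : ∀ x ∈ Set.Icc a b, ∀ y ∈ Set.Icc a b, |f x - f y| ≤ L * |x - y|)
    {p : ι → ℝ} (hp : ∀ i, p i ∈ Set.Icc a b) {x : ℝ} (hx : x ∈ Set.Icc a b) :
    sInf (lipschitzMinorant f L p '' Set.Icc a b) ≤ f x :=
  calc sInf (lipschitzMinorant f L p '' Set.Icc a b)
      ≤ lipschitzMinorant f L p x :=
        csInf_le (isCompact_Icc.bddBelow_image (continuous_lipschitzMinorant f L p).continuousOn)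
          (Set.mem_image_of_mem _ hx)
    _ ≤ f x := lipschitzMinorant_le hf hp hx

end

theorem global_minimum_bracketed_general
    (f : ℝ → ℝ) (L a b : ℝ)
    (hf : ∀ x ∈ Set.Icc a b, ∀ y ∈ Set.Icc a b, |f x - f y| ≤ L * |x - y|)
    (k : ℕ) (p : Fin (k + 1) → ℝ) (hp : ∀ i, p i ∈ Set.Icc a b)
    (xstar : ℝ) (hxstar : xstar ∈ Set.Icc a b)
    (hmin : IsMinOn f (Set.Icc a b) xstar) :
    sInf ((fun x => Finset.univ.sup' Finset.univ_nonempty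
        fun i : Fin (k + 1) => f (p i) - L * |x - p i|) '' Set.Icc a b)
      ≤ f xstar ∧
    f xstar ≤ Finset.univ.inf' Finset.univ_nonempty
        fun i : Fin (k + 1) => f (p i) :=
  ⟨csInf_image_lipschitzMinorant_le hf hp hxstar,
    Finset.le_inf' _ _ fun i _ => hmin (hp i)⟩

/-- If `f` is Lipschitz with constant `L > 0` on `[a,b]` and
`F_k(x) = max_{0 ≤ i ≤ k} (f(x_i) − L·|x − x_i|)`, then the global minimum
value `f* = f(x*)` (where `x*` is a global minimizer of `f` on `[a,b]`) is
bracketed: `min_{x∈[a,b]} F_k(x) ≤ f* ≤ min_{0 ≤ i ≤ k} f(x_i)`. -/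
theorem global_minimum_bracketed
    (f : ℝ → ℝ) (L a b : ℝ) (hL : 0 < L) (hab : a < b)
    (hf : ∀ x ∈ Set.Icc a b, ∀ y ∈ Set.Icc a b, |f x - f y| ≤ L * |x - y|)
    (k : ℕ) (p : Fin (k + 1) → ℝ) (hp : ∀ i, p i ∈ Set.Icc a b)
    (xstar : ℝ) (hxstar : xstar ∈ Set.Icc a b)
    (hmin : IsMinOn f (Set.Icc a b) xstar) :
    sInf ((fun x => Finset.univ.sup' Finset.univ_nonempty
        fun i : Fin (k + 1) => f (p i) - L * |x - p i|) '' Set.Icc a b)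
      ≤ f xstar ∧
    f xstar ≤ Finset.univ.inf' Finset.univ_nonempty
        fun i : Fin (k + 1) => f (p i) :=
  global_minimum_bracketed_general f L a b hf k p hp xstar hxstar hmin
end

section
/- Let f:ℝ→ℝ satisfy the Lipschitz condition with constant L>0 on [a,b], let a ≤ x_0 < x_1 < … < x_k ≤ b be sorted trial points with values z_i = f(x_i), and let F_k(x) = max_{0≤i≤k} (z_i − L·|x−x_i|). Then for every index i with 1 ≤ i ≤ k and every x ∈ [x_{i−1}, x_i], the lower bounding function reduces to the two adjacent terms: F_k(x) = max( z_{i−1} − L·(x − x_{i−1}), z_i − L·(x_i − x) ). -/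
/-!
Every cone `z_j - L|x - x_j|` with `x_j` to the left of `x_{i-1}` lies below the cone at
`x_{i-1}` on `[x_{i-1}, x_i]`: moving the apex from `x_j` to `x_{i-1}` shortens the distance to `x`
by `x_{i-1} - x_j`, while the Lipschitz bound lets the value drop by at most `L (x_{i-1} - x_j)`.
Symmetrically for apexes to the right of `x_i`.
-/

theorem abs_sub_eq_abs_sub_add_abs_sub_of_mem_uIcc {x y m : ℝ} (hm : m ∈ Set.uIcc x y) :
    |x - y| = |x - m| + |m - y| := by
  rcases Set.mem_uIcc.mp hm with ⟨hxm, hmy⟩ | ⟨hym, hmx⟩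
  · rw [abs_of_nonpos (by linarith), abs_of_nonpos (by linarith), abs_of_nonpos (by linarith)]
    ring
  · rw [abs_of_nonneg (by linarith), abs_of_nonneg (by linarith), abs_of_nonneg (by linarith)]
    ring

theorem sub_mul_abs_sub_le_of_mem_uIcc {f : ℝ → ℝ} {L x y m : ℝ}
    (hf : |f y - f m| ≤ L * |y - m|) (hm : m ∈ Set.uIcc x y) :
    f y - L * |x - y| ≤ f m - L * |x - m| := by
  rw [abs_sub_eq_abs_sub_add_abs_sub_of_mem_uIcc hm, abs_sub_comm m y]
  linarith [le_abs_self (f y - f m)]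

theorem Finset.sup'_eq_max_of_forall_le_or_le {ι α : Type*} [LinearOrder α] {s : Finset ι}
    (hs : s.Nonempty) (g : ι → α) {u v : ι} (hu : u ∈ s) (hv : v ∈ s)
    (h : ∀ j ∈ s, g j ≤ g u ∨ g j ≤ g v) :
    s.sup' hs g = max (g u) (g v) :=
  le_antisymm
    (Finset.sup'_le hs g fun j hj => (h j hj).elim le_max_of_le_left le_max_of_le_right)
    (max_le (Finset.le_sup' g hu) (Finset.le_sup' g hv))

/-- If `f` is Lipschitz with constant `L > 0` on `[a,b]` and
`a ≤ x₀ < x₁ < … < x_k ≤ b` are sorted trial points with values `z_i = f(x_i)`,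
then for every `1 ≤ i ≤ k` and every `x ∈ [x_{i−1}, x_i]`, the lower bounding
function `F_k(x) = max_{0 ≤ j ≤ k} (z_j − L·|x − x_j|)` reduces to the two
adjacent terms:
`F_k(x) = max (z_{i−1} − L·(x − x_{i−1})) (z_i − L·(x_i − x))`. -/
theorem minorant_two_adjacent_terms
    (f : ℝ → ℝ) (L a b : ℝ)
    (hf : ∀ x ∈ Set.Icc a b, ∀ y ∈ Set.Icc a b, |f x - f y| ≤ L * |x - y|)
    (k : ℕ) (p : Fin (k + 1) → ℝ) (hmono : StrictMono p)
    (ha : a ≤ p 0) (hb : p (Fin.last k) ≤ b)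
    (i : ℕ) (hi1 : 1 ≤ i) (hik : i ≤ k)
    (x : ℝ) (hx : x ∈ Set.Icc (p ⟨i - 1, by omega⟩) (p ⟨i, by omega⟩)) :
    (Finset.univ.sup' Finset.univ_nonempty
        fun j : Fin (k + 1) => f (p j) - L * |x - p j|) =
      max (f (p ⟨i - 1, by omega⟩) - L * (x - p ⟨i - 1, by omega⟩))
          (f (p ⟨i, by omega⟩) - L * (p ⟨i, by omega⟩ - x)) := by
  set l : Fin (k + 1) := ⟨i - 1, by omega⟩
  set r : Fin (k + 1) := ⟨i, by omega⟩
  obtain ⟨hlx, hxr⟩ := hx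
  have hmem (j : Fin (k + 1)) : p j ∈ Set.Icc a b :=
    ⟨ha.trans (hmono.monotone (Fin.zero_le j)), (hmono.monotone (Fin.le_last j)).trans hb⟩
  rw [← abs_of_nonneg (sub_nonneg.mpr hlx), ← abs_of_nonneg (sub_nonneg.mpr hxr), abs_sub_comm _ x]
  refine Finset.sup'_eq_max_of_forall_le_or_le _ (fun j => f (p j) - L * |x - p j|)
    (Finset.mem_univ l) (Finset.mem_univ r) fun j _ => ?_
  rcases le_or_gt (j : ℕ) (i - 1) with hjl | hlj
  · have hpj : p j ≤ p l := hmono.monotone (Fin.le_iff_val_le_val.mpr hjl)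
    exact .inl (sub_mul_abs_sub_le_of_mem_uIcc (hf _ (hmem j) _ (hmem l))
      (Set.mem_uIcc.mpr (.inr ⟨hpj, hlx⟩)))
  · have hpj : p r ≤ p j := hmono.monotone (Fin.le_iff_val_le_val.mpr (show i ≤ (j : ℕ) by omega))
    exact .inr (sub_mul_abs_sub_le_of_mem_uIcc (hf _ (hmem j) _ (hmem r))
      (Set.mem_uIcc.mpr (.inl ⟨hxr, hpj⟩)))
end

section
/- Let f:ℝ→ℝ satisfy the Lipschitz condition with constant L>0 on [a,b], and let a = x_0 < x_1 < … < x_k = b be sorted trial points covering [a,b] with values z_i = f(x_i). Then the global minimum of f over [a,b] satisfies min_{x∈[a,b]} f(x) ≥ min_{1≤i≤k} ( (z_{i−1} + z_i)/2 − L·(x_i − x_{i−1})/2 ). -/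
open Set

theorem Fin.exists_mem_Icc_castSucc_succ {α : Type*} [LinearOrder α] {k : ℕ} (hk : 0 < k)
    (p : Fin (k + 1) → α) {x : α} (h0 : p 0 ≤ x) (hlast : x ≤ p (Fin.last k)) :
    ∃ i : Fin k, x ∈ Icc (p i.castSucc) (p i.succ) := by
  obtain ⟨n, rfl⟩ := Nat.exists_eq_succ_of_ne_zero hk.ne'
  clear hk
  induction n with
  | zero => exact ⟨0, h0, hlast⟩
  | succ n ih =>
    by_cases hx1 : x ≤ p 1
    · exact ⟨0, h0, hx1⟩
    · obtain ⟨i, hi⟩ := ih (p ∘ Fin.succ) (le_of_not_ge hx1) hlast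
      exact ⟨i.succ, hi⟩

/-- Sum of the two cone bounds `f u - L (x - u) ≤ f x` and `f v - L (v - x) ≤ f x`. -/
theorem characteristic_le_of_mem_Icc {f : ℝ → ℝ} {L u v : ℝ}
    (hf : ∀ y ∈ Icc u v, ∀ z ∈ Icc u v, |f y - f z| ≤ L * |y - z|)
    {x : ℝ} (hx : x ∈ Icc u v) :
    (f u + f v) / 2 - L * (v - u) / 2 ≤ f x := by
  have huv : u ≤ v := hx.1.trans hx.2
  have hu := (abs_le.mp (hf u (left_mem_Icc.mpr huv) x hx)).2
  have hv := (abs_le.mp (hf v (right_mem_Icc.mpr huv) x hx)).2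
  rw [abs_of_nonpos (sub_nonpos.mpr hx.1)] at hu
  rw [abs_of_nonneg (sub_nonneg.mpr hx.2)] at hv
  linarith

/-- If `f` is Lipschitz with constant `L > 0` on `[a,b]` and
`a = x₀ < x₁ < … < x_k = b` are sorted trial points covering `[a,b]` with
values `z_i = f(x_i)`, then
`min_{x∈[a,b]} f(x) ≥ min_{1 ≤ i ≤ k} ((z_{i−1} + z_i)/2 − L·(x_i − x_{i−1})/2)`,
i.e. every value `f(x)`, `x ∈ [a,b]`, is bounded below by the smallest
characteristic `R_i`. -/
theorem min_characteristic_lower_bound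
    (f : ℝ → ℝ) (L a b : ℝ) (hab : a < b)
    (hf : ∀ x ∈ Set.Icc a b, ∀ y ∈ Set.Icc a b, |f x - f y| ≤ L * |x - y|)
    (k : ℕ) (p : Fin (k + 1) → ℝ) (hmono : StrictMono p)
    (ha : p 0 = a) (hb : p (Fin.last k) = b)
    (x : ℝ) (hx : x ∈ Set.Icc a b) :
    (Finset.univ.inf'
        (by
          refine ⟨⟨0, ?_⟩, Finset.mem_univ _⟩
          rcases Nat.eq_zero_or_pos k with h | h
          · exfalso
            subst h
            exact absurd (ha ▸ hb ▸ rfl : a = b) hab.ne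
          · exact h)
        fun i : Fin k =>
          (f (p i.castSucc) + f (p i.succ)) / 2 -
            L * (p i.succ - p i.castSucc) / 2) ≤ f x := by
  have hk : 0 < k := Nat.pos_of_ne_zero fun hk0 => by
    subst hk0
    exact hab.ne (ha ▸ hb ▸ rfl)
  obtain ⟨i, hi⟩ := Fin.exists_mem_Icc_castSucc_succ hk p (ha ▸ hx.1) (hb ▸ hx.2)
  have hsub : Icc (p i.castSucc) (p i.succ) ⊆ Icc a b :=
    Icc_subset_Icc (ha ▸ hmono.monotone (Fin.zero_le _)) (hb ▸ hmono.monotone (Fin.le_last _))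
  exact (Finset.inf'_le _ (Finset.mem_univ i)).trans
    (characteristic_le_of_mem_Icc (fun y hy z hz => hf y (hsub hy) z (hsub hz)) hi)
end

section
/- Let {D_i} be a finite family of axis-aligned hyperintervals (boxes) in ℝ^N, each with nonempty interior, such that the interiors of any two distinct boxes in the family are disjoint. Then any point p ∈ ℝ^N is a vertex of at most 2^N boxes of the family, where p is a vertex of the box ∏_{j=1}^N [a_j, b_j] if for every coordinate j either p_j = a_j or p_j = b_j. -/
/-! Record, for each box of the family having `p` as a vertex, in which coordinates `p` is the
lower endpoint. Two boxes with the same record sit in the same orthant at `p`, so near `p`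
their interiors overlap; hence disjointness makes this record injective, and there are only
`2 ^ N` records. -/

open Set

section Boxes

variable {α : Type*} [LinearOrder α] [DenselyOrdered α]

theorem Set.Ioo_inter_Ioo_nonempty_of_left_eq_or_right_eq {a b c d : α} (hab : a < b)
    (hcd : c < d) (h : a = c ∨ b = d) : (Ioo a b ∩ Ioo c d).Nonempty := by
  rw [Ioo_inter_Ioo, nonempty_Ioo, max_lt_iff, lt_min_iff, lt_min_iff]
  rcases h with rfl | rfl
  · exact ⟨⟨hab, hcd⟩, hab, hcd⟩
  · exact ⟨⟨hab, hab⟩, hcd, hcd⟩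

variable [TopologicalSpace α] [OrderTopology α] [NoMinOrder α] [NoMaxOrder α]
  {ι : Type*} [Finite ι]

theorem interior_Icc_pi (a b : ι → α) : interior (Icc a b) = univ.pi fun i ↦ Ioo (a i) (b i) := by
  simp only [← pi_univ_Icc, interior_pi_set finite_univ, interior_Icc]

theorem interior_Icc_inter_interior_Icc_nonempty {a b c d : ι → α} (hab : ∀ i, a i < b i)
    (hcd : ∀ i, c i < d i) (h : ∀ i, a i = c i ∨ b i = d i) :
    (interior (Icc a b) ∩ interior (Icc c d)).Nonempty := by
  rw [interior_Icc_pi, interior_Icc_pi, ← pi_inter_distrib, univ_pi_nonempty_iff]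
  exact fun i ↦ Ioo_inter_Ioo_nonempty_of_left_eq_or_right_eq (hab i) (hcd i) (h i)

end Boxes

/-- Let `B` be a finite family of axis-aligned boxes in `ℝ^N`,
each box given by its endpoint pair `(lo, hi)` with `lo j < hi j` for every
coordinate `j` (nonempty interior), such that the interiors of any two
distinct boxes of the family are disjoint.  Then any point `p ∈ ℝ^N` is a
vertex of at most `2^N` boxes of the family, where `p` is a vertex of the box
`∏_j [lo j, hi j]` if for every coordinate `j` either `p j = lo j` or
`p j = hi j`. -/
theorem vertex_in_at_most_two_pow_boxes
    (N : ℕ) (B : Finset ((Fin N → ℝ) × (Fin N → ℝ)))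
    (hne : ∀ q ∈ B, ∀ j, q.1 j < q.2 j)
    (hdisj : ∀ q ∈ B, ∀ r ∈ B, q ≠ r →
      Disjoint (interior (Set.Icc q.1 q.2)) (interior (Set.Icc r.1 r.2)))
    (p : Fin N → ℝ) :
    Set.ncard {q | q ∈ B ∧ ∀ j, p j = q.1 j ∨ p j = q.2 j} ≤ 2 ^ N := by
  classical
  let lowerAt (q : (Fin N → ℝ) × (Fin N → ℝ)) (j : Fin N) : Bool := decide (p j = q.1 j)
  have hinj : InjOn lowerAt {q | q ∈ B ∧ ∀ j, p j = q.1 j ∨ p j = q.2 j} := by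
    rintro q ⟨hqB, hqp⟩ r ⟨hrB, hrp⟩ hqr
    by_contra hne_qr
    have hshared : ∀ j, q.1 j = r.1 j ∨ q.2 j = r.2 j := fun j ↦ by
      have := congrFun hqr j
      simp only [lowerAt, decide_eq_decide] at this
      rcases hqp j with h | h <;> rcases hrp j with h' | h' <;> grind
    exact not_disjoint_iff_nonempty_inter.mpr
      (interior_Icc_inter_interior_Icc_nonempty (hne q hqB) (hne r hrB) hshared)
      (hdisj q hqB r hrB hne_qr)
  calc _ ≤ (univ : Set (Fin N → Bool)).ncard :=
        ncard_le_ncard_of_injOn lowerAt (fun _ _ ↦ mem_univ _) hinj finite_univ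
    _ = 2 ^ N := by simp [ncard_univ]
end
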